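/- For every integer l ≥ 2, (1 − p)·a_{l−1} ≤ √(a_{2l}). Moreover, for nonnegative integers n < m ≤ N, with l := ⌈(n+1)/(m−n)⌉, d₁ := (m+1) − l(m−n), and d₂ := l(m−n) − (n+1), one has P(m ∉ A + A and n ∉ A + A) ≤ a_{2l+2}^{d₁/2} · a_{2l}^{d₂/2} and P(m ∉ A + A and n ∉ A + A) ≤ λ₁^{1 + (m+n)/2}. -/

import Mathlib

open MeasureTheory Filter

/-- The Bernoulli(p) measure on `Bool`: `true` has probability `p`. -/
noncomputable def bern (p : ℝ) : Measure Bool :=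
  ENNReal.ofReal p • Measure.dirac true + ENNReal.ofReal (1 - p) • Measure.dirac false

/-- The law of a random subset of `{0, …, N}` where each element is included
independently with probability `p`, encoded by indicator functions. -/
noncomputable def prodBern (p : ℝ) (N : ℕ) : Measure (Fin (N + 1) → Bool) :=
  Measure.pi fun _ => bern p

/-- `n` belongs to the sumset `A + A`, where `A ⊆ {0,…,N}` is encoded by `ω`. -/
def inSumset {N : ℕ} (ω : Fin (N + 1) → Bool) (n : ℕ) : Prop :=
  ∃ a b : Fin (N + 1), ω a = true ∧ ω b = true ∧ (a : ℕ) + (b : ℕ) = n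

/-- `Y`: the number of integers in `{0,…,N}` missing from `A + A`. -/
noncomputable def Ycount (N : ℕ) (ω : Fin (N + 1) → Bool) : ℕ :=
  {n : ℕ | n ≤ N ∧ ¬ inSumset ω n}.ncard

/-- `Z`: the number of integers in `{N+1,…,2N}` missing from `A + A`. -/
noncomputable def Zcount (N : ℕ) (ω : Fin (N + 1) → Bool) : ℕ :=
  {n : ℕ | N + 1 ≤ n ∧ n ≤ 2 * N ∧ ¬ inSumset ω n}.ncard

/-- `W`: the number of integers in `{0,…,2N}` missing from `A + A`. -/
noncomputable def Wcount (N : ℕ) (ω : Fin (N + 1) → Bool) : ℕ :=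
  {n : ℕ | n ≤ 2 * N ∧ ¬ inSumset ω n}.ncard

/-- `Ỹ`: the number of integers in `{0,…,⌊N/2⌋}` missing from `A + A`. -/
noncomputable def Ytilde (N : ℕ) (ω : Fin (N + 1) → Bool) : ℕ :=
  {n : ℕ | n ≤ N / 2 ∧ ¬ inSumset ω n}.ncard

/-- `Z̃`: the number of integers in `{⌊3N/2⌋+1,…,2N}` missing from `A + A`. -/
noncomputable def Ztilde (N : ℕ) (ω : Fin (N + 1) → Bool) : ℕ :=
  {n : ℕ | 3 * N / 2 + 1 ≤ n ∧ n ≤ 2 * N ∧ ¬ inSumset ω n}.ncard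

/-- A string of `k` bits has no two consecutive ones. -/
def noTwoOnes {k : ℕ} (x : Fin k → Bool) : Prop :=
  ∀ i : ℕ, ∀ hi : i + 1 < k, ¬(x ⟨i, Nat.lt_of_succ_lt hi⟩ = true ∧ x ⟨i + 1, hi⟩ = true)

/-- `a_k`: the probability that `k` i.i.d. Bernoulli(p) bits contain no two
consecutive 1's (with `a_0 = 1`). -/
noncomputable def aseq (p : ℝ) (k : ℕ) : ℝ :=
  ((Measure.pi fun _ : Fin k => bern p) {x | noTwoOnes x}).toReal

/-!
Put `d = m - n`. The pairs `{a, b}` with `a + b ∈ {m, n}` link the residue class `r` of `[0, m]`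
modulo `d` to the class `σ r ≡ m - r`, and the two classes form a path along which `A` may not
contain two neighbours. A path with `L` vertices is avoided with probability `a_L`; when
`σ r = r` the path is traversed only up to its midpoint `v`, where `2 v ∈ {m, n}` forces `v ∉ A`,
giving `(1 - p) a_{L-1}`. Paths of different pairs of classes are independent. Bounding once with
the smaller and once with the larger element of every pair `{r, σ r}` and multiplying gives
`P(m, n ∉ A + A)² ≤ ∏_{r < d} a_{2 c_r}`, `c_r` the size of class `r`, since a self-paired class
then contributes `((1 - p) a_{c-1})² ≤ a_{2c}` (supermultiplicativity
`(1 - p) a_j a_k ≤ a_{j+1+k}`). Finally `a_{k+2} = (1 - p) a_{k+1} + p (1 - p) a_k` has dominant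
characteristic root `λ₁`, so `a_{k+1} ≤ λ₁^k`.
-/

theorem sqrt_pow_eq_rpow {x : ℝ} (hx : 0 ≤ x) (k : ℕ) : √(x ^ k) = x ^ ((k : ℝ) / 2) := by
  rw [Real.sqrt_eq_rpow, ← Real.rpow_natCast, ← Real.rpow_mul hx]
  ring_nf

section Product

variable {ι κ α : Type*} [Fintype ι] [Fintype κ] [MeasurableSpace α] (μ : Measure α)
  [IsProbabilityMeasure μ]

theorem map_pi_precomp_of_injective {v : κ → ι} (hv : v.Injective) :
    (Measure.pi fun _ : ι => μ).map (fun x k => x (v k)) = Measure.pi fun _ : κ => μ := by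
  simpa only [Measure.infinitePi_eq_pi] using
    Measure.map_infinitePi_infinitePi_of_inj (P := fun _ : ι => μ) hv

theorem pi_setOf_forall_blocks {L : κ → Type*} [∀ r, Fintype (L r)]
    {v : (Σ r, L r) → ι} (hv : v.Injective) (T : ∀ r, Set (L r → α))
    (hT : ∀ r, MeasurableSet (T r)) :
    Measure.pi (fun _ : ι => μ) {x | ∀ r, (fun j => x (v ⟨r, j⟩)) ∈ T r} =
      ∏ r, Measure.pi (fun _ : L r => μ) (T r) := by
  have hset : {x : ι → α | ∀ r, (fun j => x (v ⟨r, j⟩)) ∈ T r} =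
      (MeasurableEquiv.piCurry (fun r (_ : L r) => α) ∘ fun x s => x (v s)) ⁻¹'
        Set.univ.pi T := by
    ext x
    simp only [Set.mem_ofPred_eq, Set.mem_preimage, Function.comp_apply, Set.mem_univ_pi,
      MeasurableEquiv.coe_piCurry]
    rfl
  have hmeas : Measurable fun x : ι → α => fun s : (Σ r, L r) => x (v s) := by fun_prop
  rw [hset, ← Measure.map_apply (by fun_prop) (MeasurableSet.univ_pi hT),
    ← Measure.map_map (MeasurableEquiv.measurable _) hmeas, map_pi_precomp_of_injective μ hv,
    ← Measure.infinitePi_eq_pi, Measure.infinitePi_map_piCurry fun r (_ : L r) => μ,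
    Measure.infinitePi_eq_pi, Measure.pi_pi]
  simp only [Measure.infinitePi_eq_pi]

end Product

section NoTwoOnes

variable {k : ℕ}

theorem noTwoOnes_of_le_one (hk : k ≤ 1) (x : Fin k → Bool) : noTwoOnes x :=
  fun i hi => by omega

theorem noTwoOnes_iff_forall_castSucc (x : Fin (k + 1) → Bool) :
    noTwoOnes x ↔ ∀ i : Fin k, ¬(x i.castSucc = true ∧ x i.succ = true) :=
  ⟨fun h i => h i i.succ.isLt, fun h i hi => h ⟨i, by omega⟩⟩

theorem noTwoOnes_snoc (x : Fin (k + 1) → Bool) (b : Bool) :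
    noTwoOnes (Fin.snoc x b : Fin (k + 2) → Bool) ↔
      noTwoOnes x ∧ (b = true → x (Fin.last k) = false) := by
  rw [noTwoOnes_iff_forall_castSucc, noTwoOnes_iff_forall_castSucc, Fin.forall_fin_succ']
  simp only [Fin.succ_castSucc, Fin.succ_last, Fin.snoc_castSucc, Fin.snoc_last]
  cases b <;> simp

theorem noTwoOnes_snoc_false (x : Fin k → Bool) :
    noTwoOnes (Fin.snoc x false : Fin (k + 1) → Bool) ↔ noTwoOnes x := by
  cases k with
  | zero => exact iff_of_true (noTwoOnes_of_le_one le_rfl _) (noTwoOnes_of_le_one zero_le_one _)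
  | succ k => simp [noTwoOnes_snoc]

end NoTwoOnes

theorem pi_noTwoOnes_of_le_one (ν : Measure Bool) [IsProbabilityMeasure ν] {k : ℕ} (hk : k ≤ 1) :
    Measure.pi (fun _ : Fin k => ν) {x | noTwoOnes x} = 1 := by
  simp [noTwoOnes_of_le_one hk]

section Bits

variable (ν : Measure Bool) [SigmaFinite ν] {k : ℕ}

theorem pi_succ_apply (S : Set (Fin (k + 1) → Bool)) :
    Measure.pi (fun _ => ν) S =
      ν {true} * Measure.pi (fun _ => ν) {x | Fin.snoc x true ∈ S} +
        ν {false} * Measure.pi (fun _ => ν) {x | Fin.snoc x false ∈ S} := by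
  set e := MeasurableEquiv.piFinSuccAbove (fun _ => Bool) (Fin.last k)
  have he := measurePreserving_piFinSuccAbove (fun _ => ν) (Fin.last k)
  rw [← (he.symm e).measure_preimage_equiv S, Measure.prod_apply (Set.toFinite _).measurableSet,
    lintegral_fintype, Fintype.sum_bool]
  simp only [e, MeasurableEquiv.piFinSuccAbove_symm_apply, Fin.insertNthEquiv,
    Equiv.coe_fn_mk, Fin.insertNth_last', Set.preimage, Set.mem_ofPred_eq]
  ring

theorem pi_noTwoOnes_last_eq_false :
    Measure.pi (fun _ => ν) {x : Fin (k + 1) → Bool | noTwoOnes x ∧ x (Fin.last k) = false} =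
      ν {false} * Measure.pi (fun _ : Fin k => ν) {x | noTwoOnes x} := by
  simp [pi_succ_apply, noTwoOnes_snoc_false]

theorem pi_noTwoOnes_add_two :
    Measure.pi (fun _ : Fin (k + 2) => ν) {x | noTwoOnes x} =
      ν {false} * Measure.pi (fun _ : Fin (k + 1) => ν) {x | noTwoOnes x} +
        ν {true} * ν {false} * Measure.pi (fun _ : Fin k => ν) {x | noTwoOnes x} := by
  rw [pi_succ_apply]
  simp only [Set.mem_ofPred_eq, noTwoOnes_snoc, Bool.false_eq_true, false_imp_iff, and_true,
    forall_const, pi_noTwoOnes_last_eq_false]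
  ring

end Bits

section Aseq

variable {p : ℝ}

theorem bern_singleton_true : bern p {true} = ENNReal.ofReal p := by simp [bern]

theorem bern_singleton_false : bern p {false} = ENNReal.ofReal (1 - p) := by simp [bern]

theorem isProbabilityMeasure_bern (hp0 : 0 ≤ p) (hp1 : p ≤ 1) : IsProbabilityMeasure (bern p) :=
  ⟨by simp [bern, ← ENNReal.ofReal_add hp0 (sub_nonneg.2 hp1)]⟩

theorem aseq_nonneg (k : ℕ) : 0 ≤ aseq p k := ENNReal.toReal_nonneg

theorem aseq_of_le_one (hp0 : 0 ≤ p) (hp1 : p ≤ 1) {k : ℕ} (hk : k ≤ 1) : aseq p k = 1 := by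
  have := isProbabilityMeasure_bern hp0 hp1
  simp [aseq, pi_noTwoOnes_of_le_one _ hk]

theorem aseq_add_two (hp0 : 0 ≤ p) (hp1 : p ≤ 1) (k : ℕ) :
    aseq p (k + 2) = (1 - p) * aseq p (k + 1) + p * (1 - p) * aseq p k := by
  have := isProbabilityMeasure_bern hp0 hp1
  rw [aseq, pi_noTwoOnes_add_two, bern_singleton_true, bern_singleton_false,
    ENNReal.toReal_add (by finiteness) (by finiteness)]
  simp [aseq, ENNReal.toReal_ofReal hp0, ENNReal.toReal_ofReal (sub_nonneg.2 hp1), mul_assoc]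

theorem toReal_pi_noTwoOnes_last_eq_false (hp0 : 0 ≤ p) (hp1 : p ≤ 1) (k : ℕ) :
    (Measure.pi (fun _ => bern p)
      {x : Fin (k + 1) → Bool | noTwoOnes x ∧ x (Fin.last k) = false}).toReal =
      (1 - p) * aseq p k := by
  have := isProbabilityMeasure_bern hp0 hp1
  simp [pi_noTwoOnes_last_eq_false, bern_singleton_false, aseq,
    ENNReal.toReal_ofReal (sub_nonneg.2 hp1)]

theorem one_sub_mul_aseq_le_aseq_succ (hp0 : 0 ≤ p) (hp1 : p ≤ 1) (k : ℕ) :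
    (1 - p) * aseq p k ≤ aseq p (k + 1) := by
  cases k with
  | zero => simp [aseq_of_le_one hp0 hp1, hp0]
  | succ k =>
    rw [aseq_add_two hp0 hp1]
    have := mul_nonneg (mul_nonneg hp0 (sub_nonneg.2 hp1)) (aseq_nonneg (p := p) k)
    linarith

theorem one_sub_mul_aseq_mul_aseq_le (hp0 : 0 ≤ p) (hp1 : p ≤ 1) (j k : ℕ) :
    (1 - p) * aseq p j * aseq p k ≤ aseq p (j + 1 + k) := by
  induction k using Nat.twoStepInduction with
  | zero => simpa [aseq_of_le_one hp0 hp1] using one_sub_mul_aseq_le_aseq_succ hp0 hp1 j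
  | one =>
    rw [aseq_of_le_one hp0 hp1 le_rfl, mul_one, aseq_add_two hp0 hp1]
    nlinarith [one_sub_mul_aseq_le_aseq_succ hp0 hp1 j, aseq_nonneg (p := p) j]
  | more k ih₀ ih₁ =>
    rw [← add_assoc] at ih₁
    rw [aseq_add_two hp0 hp1, ← add_assoc, aseq_add_two hp0 hp1]
    nlinarith [mul_le_mul_of_nonneg_left ih₁ (sub_nonneg.2 hp1),
      mul_le_mul_of_nonneg_left ih₀ (mul_nonneg hp0 (sub_nonneg.2 hp1))]

theorem sq_one_sub_mul_aseq_le (hp0 : 0 ≤ p) (hp1 : p ≤ 1) (k : ℕ) :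
    ((1 - p) * aseq p k) ^ 2 ≤ aseq p (2 * k + 2) :=
  calc ((1 - p) * aseq p k) ^ 2 ≤ (1 - p) * aseq p k * aseq p (k + 1) := by
        rw [sq]
        exact mul_le_mul_of_nonneg_left (one_sub_mul_aseq_le_aseq_succ hp0 hp1 k)
          (mul_nonneg (sub_nonneg.2 hp1) (aseq_nonneg k))
    _ ≤ aseq p (2 * k + 2) := by
        convert one_sub_mul_aseq_mul_aseq_le hp0 hp1 k (k + 1) using 2
        ring

noncomputable def dominantRoot (p : ℝ) : ℝ := (1 - p + √((1 - p) * (1 + 3 * p))) / 2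

theorem dominantRoot_sq (hp0 : 0 ≤ p) (hp1 : p ≤ 1) :
    dominantRoot p ^ 2 = (1 - p) * dominantRoot p + p * (1 - p) := by
  have := Real.sq_sqrt (mul_nonneg (sub_nonneg.2 hp1) (by linarith : 0 ≤ 1 + 3 * p))
  unfold dominantRoot
  linear_combination this / 4

theorem dominantRoot_nonneg (hp1 : p ≤ 1) : 0 ≤ dominantRoot p := by
  unfold dominantRoot
  have := Real.sqrt_nonneg ((1 - p) * (1 + 3 * p))
  linarith

theorem one_sub_sq_le_dominantRoot (hp0 : 0 ≤ p) (hp1 : p ≤ 1) : 1 - p ^ 2 ≤ dominantRoot p := by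
  have key : (1 - p) * (1 + 2 * p) ≤ √((1 - p) * (1 + 3 * p)) :=
    Real.le_sqrt_of_sq_le (by nlinarith [mul_nonneg (pow_nonneg hp0 3) (sub_nonneg.2 hp1)])
  unfold dominantRoot
  linarith

theorem aseq_succ_le_dominantRoot_pow (hp0 : 0 ≤ p) (hp1 : p ≤ 1) (k : ℕ) :
    aseq p (k + 1) ≤ dominantRoot p ^ k := by
  induction k using Nat.twoStepInduction with
  | zero => simp [aseq_of_le_one hp0 hp1]
  | one =>
    rw [aseq_add_two hp0 hp1, aseq_of_le_one hp0 hp1 le_rfl, aseq_of_le_one hp0 hp1 zero_le_one]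
    linarith [one_sub_sq_le_dominantRoot hp0 hp1]
  | more k ih₀ ih₁ =>
    rw [aseq_add_two hp0 hp1, pow_add, dominantRoot_sq hp0 hp1]
    nlinarith [mul_le_mul_of_nonneg_left ih₁ (sub_nonneg.2 hp1),
      mul_le_mul_of_nonneg_left ih₀ (mul_nonneg hp0 (sub_nonneg.2 hp1)),
      pow_succ (dominantRoot p) k]

end Aseq

section Chains

variable (m d : ℕ)

def partnerResidue (r : ℕ) : ℕ := (m - r) % d

def classTop (r : ℕ) : ℕ := (m - r) / d

/-- The path `s + k d, r, s + (k - 1) d, r + d, …, s, r + k d` through the classes `r` and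
`s = partnerResidue m d r`, where `k = classTop m d r`; consecutive vertices add up alternately
to `m` and `m - d`. -/
def chainVertex (r j : ℕ) : ℕ :=
  if j % 2 = 0 then partnerResidue m d r + (classTop m d r - j / 2) * d else r + j / 2 * d

/-- Index of the last vertex used: for a self-paired class the second half of the path retraces
the first. -/
def chainLength (r : ℕ) : ℕ :=
  if partnerResidue m d r = r then classTop m d r else 2 * classTop m d r + 1

variable {m d} {r : ℕ}

theorem add_partnerResidue_add_classTop_mul (hrm : r ≤ m) :
    r + partnerResidue m d r + classTop m d r * d = m := by
  have := Nat.mod_add_div' (m - r) d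
  unfold partnerResidue classTop
  omega

theorem partnerResidue_lt (hd : 0 < d) : partnerResidue m d r < d := Nat.mod_lt _ hd

theorem partnerResidue_partnerResidue (hr : r < d) (hrm : r ≤ m) :
    partnerResidue m d (partnerResidue m d r) = r := by
  have h := add_partnerResidue_add_classTop_mul (d := d) hrm
  rw [partnerResidue, show m - partnerResidue m d r = r + classTop m d r * d by omega,
    Nat.add_mul_mod_self_right, Nat.mod_eq_of_lt hr]

theorem chainVertex_add_succ {n : ℕ} (hnm : n + d = m) (hrm : r ≤ m) {j : ℕ}
    (hj : j < 2 * classTop m d r + 1) :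
    chainVertex m d r j + chainVertex m d r (j + 1) = m ∨
      chainVertex m d r j + chainVertex m d r (j + 1) = n := by
  have h := add_partnerResidue_add_classTop_mul (d := d) hrm
  unfold chainVertex
  set k := classTop m d r
  rcases Nat.mod_two_eq_zero_or_one j with hj2 | hj2
  · have hsplit : (k - j / 2) * d + j / 2 * d = k * d := by
      rw [← add_mul, Nat.sub_add_cancel (by omega)]
    rw [if_pos hj2, if_neg (by omega), show (j + 1) / 2 = j / 2 by omega]
    omega
  · have hsplit : j / 2 * d + (k - (j + 1) / 2) * d + d = k * d := by
      rw [← add_mul, ← add_one_mul, show j / 2 + (k - (j + 1) / 2) + 1 = k by omega]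
    rw [if_neg (by omega), if_pos (by omega)]
    omega

theorem chainVertex_le (hrm : r ≤ m) {j : ℕ} (hj : j ≤ 2 * classTop m d r + 1) :
    chainVertex m d r j ≤ m := by
  have h := add_partnerResidue_add_classTop_mul (d := d) hrm
  unfold chainVertex
  split_ifs
  · have := Nat.mul_le_mul_right d (Nat.sub_le (classTop m d r) (j / 2))
    omega
  · have := Nat.mul_le_mul_right d (show j / 2 ≤ classTop m d r by omega)
    omega

theorem two_mul_chainVertex_classTop {n : ℕ} (hnm : n + d = m) (hrm : r ≤ m)
    (hloop : partnerResidue m d r = r) :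
    2 * chainVertex m d r (classTop m d r) = m ∨ 2 * chainVertex m d r (classTop m d r) = n := by
  have h := add_partnerResidue_add_classTop_mul (d := d) hrm
  rw [hloop] at h
  unfold chainVertex
  rw [hloop]
  set k := classTop m d r
  rcases Nat.mod_two_eq_zero_or_one k with hk2 | hk2
  · have hsplit : (k - k / 2) * d + (k - k / 2) * d = k * d := by
      rw [← add_mul, show k - k / 2 + (k - k / 2) = k by omega]
    rw [if_pos hk2]
    omega
  · have hsplit : k / 2 * d + k / 2 * d + d = k * d := by
      rw [← add_mul, ← add_one_mul, show k / 2 + k / 2 + 1 = k by omega]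
    rw [if_neg (by omega)]
    omega

theorem chainVertex_mod (hd : 0 < d) (hr : r < d) (j : ℕ) :
    chainVertex m d r j % d = if j % 2 = 0 then partnerResidue m d r else r := by
  unfold chainVertex
  split_ifs
  · rw [Nat.add_mul_mod_self_right, Nat.mod_eq_of_lt (partnerResidue_lt hd)]
  · rw [Nat.add_mul_mod_self_right, Nat.mod_eq_of_lt hr]

theorem chainVertex_div (hd : 0 < d) (hr : r < d) (j : ℕ) :
    chainVertex m d r j / d = if j % 2 = 0 then classTop m d r - j / 2 else j / 2 := by
  unfold chainVertex
  split_ifs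
  · rw [Nat.add_mul_div_right _ _ hd, Nat.div_eq_of_lt (partnerResidue_lt hd), zero_add]
  · rw [Nat.add_mul_div_right _ _ hd, Nat.div_eq_of_lt hr, zero_add]

theorem chainVertex_injOn (hd : 0 < d) (hr : r < d) {j j' : ℕ} (hj : j ≤ chainLength m d r)
    (hj' : j' ≤ chainLength m d r) (h : chainVertex m d r j = chainVertex m d r j') :
    j = j' := by
  have hmod := congrArg (· % d) h
  have hdiv := congrArg (· / d) h
  simp only [chainVertex_mod hd hr, chainVertex_div hd hr] at hmod hdiv
  unfold chainLength at hj hj'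
  split_ifs at hmod hdiv hj hj' <;> omega

end Chains

section Avoidance

variable {N m n d r : ℕ}

theorem not_both_of_add_eq {ω : Fin (N + 1) → Bool} (hm : ¬inSumset ω m) (hn : ¬inSumset ω n)
    {a b : Fin (N + 1)} (hab : (a : ℕ) + b = m ∨ (a : ℕ) + b = n) :
    ¬(ω a = true ∧ ω b = true) := by
  rintro ⟨ha, hb⟩
  rcases hab with h | h
  exacts [hm ⟨a, b, ha, hb, h⟩, hn ⟨a, b, ha, hb, h⟩]

variable (N m d r)

def chainMap (j : Fin (chainLength m d r + 1)) : Fin (N + 1) :=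
  Fin.ofNat (N + 1) (chainVertex m d r j)

def chainConstraint : Set (Fin (chainLength m d r + 1) → Bool) :=
  {x | noTwoOnes x ∧ (partnerResidue m d r = r → x (Fin.last _) = false)}

variable {N m d r}

theorem chainLength_le : chainLength m d r ≤ 2 * classTop m d r + 1 := by
  unfold chainLength
  split_ifs <;> omega

theorem val_chainMap (hmN : m ≤ N) (hrm : r ≤ m) (j : Fin (chainLength m d r + 1)) :
    (chainMap N m d r j : ℕ) = chainVertex m d r j := by
  have := chainLength_le (m := m) (d := d) (r := r)
  have := chainVertex_le (d := d) hrm (j := j) (by omega)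
  rw [chainMap, Fin.val_ofNat, Nat.mod_eq_of_lt (by omega)]

theorem comp_chainMap_mem_chainConstraint {ω : Fin (N + 1) → Bool} (hnm : n + d = m)
    (hmN : m ≤ N) (hrm : r ≤ m) (hm : ¬inSumset ω m) (hn : ¬inSumset ω n) :
    (fun j => ω (chainMap N m d r j)) ∈ chainConstraint m d r := by
  refine ⟨(noTwoOnes_iff_forall_castSucc _).2 fun i => not_both_of_add_eq hm hn ?_, fun hloop => ?_⟩
  · rw [val_chainMap hmN hrm, val_chainMap hmN hrm, Fin.val_castSucc, Fin.val_succ]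
    exact chainVertex_add_succ hnm hrm (lt_of_lt_of_le i.isLt chainLength_le)
  · have hlast : (Fin.last (chainLength m d r) : ℕ) = classTop m d r := by
      simp [chainLength, hloop]
    have := not_both_of_add_eq (a := chainMap N m d r (Fin.last _))
      (b := chainMap N m d r (Fin.last _)) hm hn
      (by simpa only [val_chainMap hmN hrm, hlast, two_mul] using
        two_mul_chainVertex_classTop hnm hrm hloop)
    simpa using this

theorem chainMap_sigma_injective (hd : 0 < d) (hdm : d ≤ m) (hmN : m ≤ N) {K : Finset ℕ}
    (hK : K ⊆ Finset.range d)
    (hKσ : ∀ r ∈ K, partnerResidue m d r ∈ K → partnerResidue m d r = r) :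
    Function.Injective fun s : Σ r : K, Fin (chainLength m d r + 1) => chainMap N m d s.1 s.2 := by
  rintro ⟨⟨r, hr⟩, j⟩ ⟨⟨r', hr'⟩, j'⟩ h
  have hrd : r < d := Finset.mem_range.1 (hK hr)
  have hr'd : r' < d := Finset.mem_range.1 (hK hr')
  have hv : chainVertex m d r j = chainVertex m d r' j' := by
    simpa only [val_chainMap hmN (by omega : r ≤ m), val_chainMap hmN (by omega : r' ≤ m)]
      using congrArg Fin.val h
  obtain rfl : r = r' := by
    have hmod := congrArg (· % d) hv
    simp only [chainVertex_mod hd hrd, chainVertex_mod hd hr'd] at hmod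
    have hσ := partnerResidue_partnerResidue (m := m) hrd (by omega)
    have hσ' := partnerResidue_partnerResidue (m := m) hr'd (by omega)
    have := hKσ r hr
    have := hKσ r' hr'
    split_ifs at hmod <;> grind
  obtain rfl : j = j' :=
    Fin.ext (chainVertex_injOn hd hrd (Nat.lt_succ_iff.1 j.isLt) (Nat.lt_succ_iff.1 j'.isLt) hv)
  rfl

theorem pi_avoid_le_prod_chainConstraint (ν : Measure Bool) [IsProbabilityMeasure ν]
    (hd : 0 < d) (hnm : n + d = m) (hmN : m ≤ N) {K : Finset ℕ} (hK : K ⊆ Finset.range d)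
    (hKσ : ∀ r ∈ K, partnerResidue m d r ∈ K → partnerResidue m d r = r) :
    Measure.pi (fun _ : Fin (N + 1) => ν) {ω | ¬inSumset ω m ∧ ¬inSumset ω n} ≤
      ∏ r ∈ K, Measure.pi (fun _ => ν) (chainConstraint m d r) :=
  calc Measure.pi (fun _ : Fin (N + 1) => ν) {ω | ¬inSumset ω m ∧ ¬inSumset ω n}
      ≤ Measure.pi (fun _ => ν)
          {ω | ∀ r : K, (fun j => ω (chainMap N m d r j)) ∈ chainConstraint m d r} :=
        measure_mono fun ω ⟨hm, hn⟩ r => comp_chainMap_mem_chainConstraint hnm hmN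
          (by have := Finset.mem_range.1 (hK r.2); omega) hm hn
    _ = ∏ r : K, Measure.pi (fun _ => ν) (chainConstraint m d r) :=
        pi_setOf_forall_blocks ν (chainMap_sigma_injective hd (by omega) hmN hK hKσ) _
          fun _ => (Set.toFinite _).measurableSet
    _ = ∏ r ∈ K, Measure.pi (fun _ => ν) (chainConstraint m d r) :=
        Finset.prod_coe_sort K fun r => Measure.pi (fun _ => ν) (chainConstraint m d r)

end Avoidance

section MainBound

variable {p : ℝ} {N m n d l d1 d2 : ℕ}

theorem toReal_pi_noTwoOnes_and_last (hp0 : 0 ≤ p) (hp1 : p ≤ 1) (P : Prop) [Decidable P]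
    (L : ℕ) :
    (Measure.pi (fun _ => bern p)
      {x : Fin (L + 1) → Bool | noTwoOnes x ∧ (P → x (Fin.last L) = false)}).toReal =
      if P then (1 - p) * aseq p L else aseq p (L + 1) := by
  split_ifs with hP
  · simpa [hP] using toReal_pi_noTwoOnes_last_eq_false hp0 hp1 L
  · simp [hP, aseq]

theorem toReal_pi_chainConstraint_mul_ite_le (hp0 : 0 ≤ p) (hp1 : p ≤ 1) (m d r : ℕ) :
    (Measure.pi (fun _ => bern p) (chainConstraint m d r)).toReal *
        (if partnerResidue m d r = r then
          (Measure.pi (fun _ => bern p) (chainConstraint m d r)).toReal else 1) ≤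
      aseq p (2 * classTop m d r + 2) := by
  rw [chainConstraint, toReal_pi_noTwoOnes_and_last hp0 hp1]
  by_cases hloop : partnerResidue m d r = r
  · simpa [hloop, chainLength, sq] using sq_one_sub_mul_aseq_le hp0 hp1 (classTop m d r)
  · simp [hloop, chainLength]

theorem toReal_prodBern_avoid_le_prod (hp0 : 0 ≤ p) (hp1 : p ≤ 1) (hd : 0 < d) (hnm : n + d = m)
    (hmN : m ≤ N) {K : Finset ℕ} (hK : K ⊆ Finset.range d)
    (hKσ : ∀ r ∈ K, partnerResidue m d r ∈ K → partnerResidue m d r = r) :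
    (prodBern p N {ω | ¬inSumset ω m ∧ ¬inSumset ω n}).toReal ≤
      ∏ r ∈ K, (Measure.pi (fun _ => bern p) (chainConstraint m d r)).toReal := by
  have := isProbabilityMeasure_bern hp0 hp1
  rw [← ENNReal.toReal_prod]
  exact ENNReal.toReal_mono (ENNReal.prod_ne_top fun _ _ => measure_ne_top _ _)
    (pi_avoid_le_prod_chainConstraint _ hd hnm hmN hK hKσ)

theorem sq_toReal_prodBern_avoid_le (hp0 : 0 ≤ p) (hp1 : p ≤ 1) (hd : 0 < d) (hnm : n + d = m)
    (hmN : m ≤ N) :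
    (prodBern p N {ω | ¬inSumset ω m ∧ ¬inSumset ω n}).toReal ^ 2 ≤
      ∏ r ∈ Finset.range d, aseq p (2 * classTop m d r + 2) := by
  set w := fun r => (Measure.pi (fun _ => bern p) (chainConstraint m d r)).toReal
  have hσ : ∀ r ∈ Finset.range d, partnerResidue m d (partnerResidue m d r) = r := fun r hr =>
    partnerResidue_partnerResidue (Finset.mem_range.1 hr) (by have := Finset.mem_range.1 hr; omega)
  set low := (Finset.range d).filter fun r => r ≤ partnerResidue m d r
  set high := (Finset.range d).filter fun r => partnerResidue m d r ≤ r
  have hlow := toReal_prodBern_avoid_le_prod hp0 hp1 hd hnm hmN (K := low)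
    (Finset.filter_subset _ _) fun r hr hr' => by
      simp only [low, Finset.mem_filter, hσ r (Finset.mem_filter.1 hr).1] at hr hr'
      omega
  have hhigh := toReal_prodBern_avoid_le_prod hp0 hp1 hd hnm hmN (K := high)
    (Finset.filter_subset _ _) fun r hr hr' => by
      simp only [high, Finset.mem_filter, hσ r (Finset.mem_filter.1 hr).1] at hr hr'
      omega
  have hunion : low ∪ high = Finset.range d := by
    rw [← Finset.filter_or]
    exact Finset.filter_true_of_mem fun r _ => le_total _ _
  have hinter : low ∩ high = (Finset.range d).filter fun r => partnerResidue m d r = r := by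
    rw [← Finset.filter_and]
    exact Finset.filter_congr fun r _ => by omega
  have hw : ∀ r, 0 ≤ w r := fun _ => ENNReal.toReal_nonneg
  calc (prodBern p N {ω | ¬inSumset ω m ∧ ¬inSumset ω n}).toReal ^ 2
      ≤ (∏ r ∈ low, w r) * ∏ r ∈ high, w r := by
        rw [sq]
        exact mul_le_mul hlow hhigh ENNReal.toReal_nonneg (Finset.prod_nonneg fun r _ => hw r)
    _ = ∏ r ∈ Finset.range d, w r * (if partnerResidue m d r = r then w r else 1) := by
        rw [← Finset.prod_union_inter, hunion, hinter, Finset.prod_filter,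
          Finset.prod_mul_distrib]
    _ ≤ ∏ r ∈ Finset.range d, aseq p (2 * classTop m d r + 2) :=
        Finset.prod_le_prod (fun r _ => mul_nonneg (hw r) (by split_ifs <;> simp [hw]))
          fun r _ => toReal_pi_chainConstraint_mul_ite_le hp0 hp1 m d r

theorem classTop_of_lt (hm : m + 1 = l * d + d1) (hd1 : d1 ≤ d) {r : ℕ} (hr : r < d1) :
    classTop m d r = l := by
  have := add_one_mul l d
  exact Nat.div_eq_of_lt_le (by omega) (by omega)

theorem classTop_of_le (hm : m + 1 = (l + 1) * d + d1) {r : ℕ} (hr1 : d1 ≤ r) (hr : r < d) :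
    classTop m d r = l := by
  have := add_one_mul l d
  exact Nat.div_eq_of_lt_le (by omega) (by omega)

theorem prod_aseq_classTop (hm : m + 1 = l * d + d1) (hl : 0 < l) (hdd : d1 + d2 = d) :
    ∏ r ∈ Finset.range d, aseq p (2 * classTop m d r + 2) =
      aseq p (2 * l + 2) ^ d1 * aseq p (2 * l) ^ d2 := by
  obtain ⟨l, rfl⟩ : ∃ l', l = l' + 1 := ⟨l - 1, by omega⟩
  have hlong : ∀ r ∈ Finset.range d1,
      aseq p (2 * classTop m d r + 2) = aseq p (2 * (l + 1) + 2) := fun r hr => by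
    rw [classTop_of_lt hm (by omega) (Finset.mem_range.1 hr)]
  have hshort : ∀ r ∈ Finset.Ico d1 d,
      aseq p (2 * classTop m d r + 2) = aseq p (2 * (l + 1)) := fun r hr => by
    rw [classTop_of_le hm (Finset.mem_Ico.1 hr).1 (Finset.mem_Ico.1 hr).2, mul_add_one]
  rw [← Finset.prod_range_mul_prod_Ico _ (by omega : d1 ≤ d), Finset.prod_congr rfl hlong,
    Finset.prod_congr rfl hshort, Finset.prod_const, Finset.prod_const, Finset.card_range,
    Nat.card_Ico, show d - d1 = d2 by omega]

end MainBound

theorem aseq_pow_mul_aseq_pow_le_dominantRoot_pow {p : ℝ} (hp0 : 0 ≤ p) (hp1 : p ≤ 1)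
    {m n d l d1 d2 : ℕ} (hnm : n + d = m) (hm : m + 1 = l * d + d1) (hl : 0 < l)
    (hdd : d1 + d2 = d) :
    aseq p (2 * l + 2) ^ d1 * aseq p (2 * l) ^ d2 ≤ dominantRoot p ^ (m + n + 2) := by
  obtain ⟨l, rfl⟩ : ∃ l', l = l' + 1 := ⟨l - 1, by omega⟩
  have hexp : m + n + 2 = (2 * l + 3) * d1 + (2 * l + 1) * d2 := by
    subst hdd hnm
    nlinarith
  have hlong := aseq_succ_le_dominantRoot_pow hp0 hp1 (2 * l + 3)
  have hshort := aseq_succ_le_dominantRoot_pow hp0 hp1 (2 * l + 1)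
  rw [show 2 * l + 3 + 1 = 2 * (l + 1) + 2 by ring] at hlong
  rw [show 2 * l + 1 + 1 = 2 * (l + 1) by ring] at hshort
  rw [hexp, pow_add, pow_mul, pow_mul]
  exact mul_le_mul (pow_le_pow_left₀ (aseq_nonneg _) hlong _)
    (pow_le_pow_left₀ (aseq_nonneg _) hshort _) (pow_nonneg (aseq_nonneg _) _)
    (pow_nonneg (pow_nonneg (dominantRoot_nonneg hp1) _) _)

/-- `(1-p)·a_{l-1} ≤ √(a_{2l})` for `l ≥ 2`, and the exponential upper bounds
`P(m, n ∉ A+A) ≤ a_{2l+2}^(d₁/2)·a_{2l}^(d₂/2)` and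
`P(m, n ∉ A+A) ≤ λ₁^(1+(m+n)/2)`. -/
theorem stmt13 (p : ℝ) (hp0 : 0 < p) (hp1 : p < 1) (N : ℕ) :
    (∀ l : ℕ, 2 ≤ l → (1 - p) * aseq p (l - 1) ≤ Real.sqrt (aseq p (2 * l))) ∧
    ∀ m n : ℕ, n < m → m ≤ N →
      ∀ l d1 d2 : ℕ,
        (l : ℤ) = ⌈((n : ℚ) + 1) / ((m : ℚ) - (n : ℚ))⌉ →
        (d1 : ℤ) = ((m : ℤ) + 1) - (l : ℤ) * ((m : ℤ) - (n : ℤ)) →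
        (d2 : ℤ) = (l : ℤ) * ((m : ℤ) - (n : ℤ)) - ((n : ℤ) + 1) →
        (prodBern p N {ω | ¬ inSumset ω m ∧ ¬ inSumset ω n}).toReal ≤
            aseq p (2 * l + 2) ^ ((d1 : ℝ) / 2) * aseq p (2 * l) ^ ((d2 : ℝ) / 2) ∧
        (prodBern p N {ω | ¬ inSumset ω m ∧ ¬ inSumset ω n}).toReal ≤
            ((1 - p + Real.sqrt ((1 - p) * (1 + 3 * p))) / 2) ^ (1 + ((m : ℝ) + (n : ℝ)) / 2) := by
  refine ⟨fun l hl => ?_, fun m n hnm hmN l d1 d2 _ hd1 hd2 => ?_⟩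
  · obtain ⟨k, rfl⟩ : ∃ k, l = k + 1 := ⟨l - 1, by omega⟩
    simpa [mul_add_one] using Real.le_sqrt_of_sq_le (sq_one_sub_mul_aseq_le hp0.le hp1.le k)
  have hm : m + 1 = l * (m - n) + d1 := by zify [hnm.le]; linarith
  have hdd : d1 + d2 = m - n := by zify [hnm.le]; linarith
  have hl : 0 < l := Nat.pos_of_ne_zero fun hl0 => by subst hl0; push_cast at hd2; omega
  have hsq := Real.le_sqrt_of_sq_le <|
    (sq_toReal_prodBern_avoid_le hp0.le hp1.le (n := n) (d := m - n) (by omega) (by omega)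
      hmN).trans_eq (prod_aseq_classTop hm hl hdd)
  refine ⟨hsq.trans_eq ?_, hsq.trans ?_⟩
  · rw [Real.sqrt_mul (pow_nonneg (aseq_nonneg _) _), sqrt_pow_eq_rpow (aseq_nonneg _),
      sqrt_pow_eq_rpow (aseq_nonneg _)]
  · calc _ ≤ √(dominantRoot p ^ (m + n + 2)) := Real.sqrt_le_sqrt <|
          aseq_pow_mul_aseq_pow_le_dominantRoot_pow hp0.le hp1.le (by omega) hm hl hdd
      _ = dominantRoot p ^ (1 + ((m : ℝ) + n) / 2) := by
          rw [sqrt_pow_eq_rpow (dominantRoot_nonneg hp1.le)]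
          push_cast
          ring_nf
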